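/- arXiv:1601.07809 — 2 statements merged into one kernel-verified Lean document; each statement's English description precedes it below -/
import Mathlib

section
/- If G is a C₄-free simple graph on n vertices with degree sequence d₁, ..., dₙ, then the sum of the squares of the degrees satisfies Σ dᵢ² ≤ n² + 2·n^{3/2}. -/
/-- `G` is `C₄`-free: no two distinct vertices have two or more common neighbors. -/
def C4Free {V : Type*} (G : SimpleGraph V) : Prop :=
  ∀ x y z w : V, x ≠ y → G.Adj x z → G.Adj y z → G.Adj x w → G.Adj y w → z = w

/-- The proper square of `G`: `x ~ y` iff `x ≠ y` and they have a common neighbor. -/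
def properSquare {V : Type*} (G : SimpleGraph V) : SimpleGraph V where
  Adj x y := x ≠ y ∧ ∃ z, G.Adj x z ∧ G.Adj z y
  symm := by
    constructor
    rintro x y ⟨hxy, z, h1, h2⟩
    exact ⟨hxy.symm, z, h2.symm, h1.symm⟩
  loopless := by constructor; rintro x ⟨h, -⟩; exact h rfl

/-- The degree of vertex `v` in `G`. -/
noncomputable def deg {V : Type*} (G : SimpleGraph V) (v : V) : ℕ :=
  Nat.card {w : V | G.Adj v w}

/-!
Double count paths of length two: distinct vertices have at most one common neighbour, so
`∑ d(d - 1) ≤ n(n - 1)`, i.e. `∑ d² ≤ n² + ∑ d`. With Cauchy–Schwarz, `(∑ d)² ≤ n ∑ d²`, this gives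
`∑ d ≤ n + n^{3/2}` and hence the bound.
-/

open Finset

namespace SimpleGraph

theorem deg_eq_degree {V : Type*} (G : SimpleGraph V) (v : V) [Fintype (G.neighborSet v)] :
    deg G v = G.degree v :=
  show Nat.card (G.neighborSet v) = _ from
    Nat.card_eq_fintype_card.trans (G.card_neighborSet_eq_degree v)

end SimpleGraph

namespace C4Free

open SimpleGraph

variable {V : Type*} [Fintype V] {G : SimpleGraph V} [DecidableRel G.Adj]

theorem pairwiseDisjoint_offDiag_neighborFinset (h : C4Free G) :
    ((univ : Finset V) : Set V).PairwiseDisjoint fun v => (G.neighborFinset v).offDiag := by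
  intro u _ v _ huv
  refine Finset.disjoint_left.mpr fun p hpu hpv => huv ?_
  obtain ⟨hxu, hyu, hxy⟩ := mem_offDiag.mp hpu
  obtain ⟨hxv, hyv, -⟩ := mem_offDiag.mp hpv
  rw [mem_neighborFinset] at hxu hyu hxv hyv
  exact h p.1 p.2 u v hxy hxu.symm hyu.symm hxv.symm hyv.symm

theorem sum_card_offDiag_neighborFinset_le (h : C4Free G) :
    ∑ v, (G.neighborFinset v).offDiag.card ≤ (univ : Finset V).offDiag.card := by
  classical
  rw [← card_biUnion h.pairwiseDisjoint_offDiag_neighborFinset]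
  exact card_le_card (biUnion_subset.mpr fun v _ => offDiag_mono (subset_univ _))

theorem sum_degree_sq_le (h : C4Free G) :
    ∑ v, G.degree v ^ 2 ≤ Fintype.card V ^ 2 + ∑ v, G.degree v := by
  have hsq : ∀ v, G.degree v ^ 2 = (G.neighborFinset v).offDiag.card + G.degree v := fun v => by
    rw [offDiag_card, card_neighborFinset_eq_degree, sq, Nat.sub_add_cancel (Nat.le_mul_self _)]
  calc ∑ v, G.degree v ^ 2
      = ∑ v, (G.neighborFinset v).offDiag.card + ∑ v, G.degree v := by
        rw [← sum_add_distrib]; exact sum_congr rfl fun v _ => hsq v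
    _ ≤ (univ : Finset V).offDiag.card + ∑ v, G.degree v := by
        gcongr; exact h.sum_card_offDiag_neighborFinset_le
    _ ≤ Fintype.card V ^ 2 + ∑ v, G.degree v := by
        gcongr; rw [offDiag_card, card_univ, ← sq]; exact Nat.sub_le _ _

end C4Free

theorem Real.rpow_three_halves {x : ℝ} (hx : 0 ≤ x) : x ^ ((3 : ℝ) / 2) = x * √x := by
  rw [show (3 : ℝ) / 2 = 1 + 1 / 2 by norm_num, Real.rpow_add' hx (by norm_num), Real.rpow_one,
    Real.sqrt_eq_rpow]

theorem Nat.cast_le_mul_sqrt (n : ℕ) : (n : ℝ) ≤ n * √n := by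
  rcases n.eq_zero_or_pos with rfl | hn
  · simp
  · exact le_mul_of_one_le_right n.cast_nonneg (Real.one_le_sqrt.mpr (by exact_mod_cast hn))

/-- The hypotheses give `S² ≤ n S + n³`, which forces `S ≤ n + n^{3/2}`. -/
theorem le_sq_add_two_mul_mul_sqrt {n : ℕ} {S Q : ℝ} (hQ : Q ≤ n ^ 2 + S) (hS : S ^ 2 ≤ n * Q) :
    Q ≤ n ^ 2 + 2 * (n * √n) := by
  set t := (n : ℝ) * √n
  have ht : t ^ 2 = n ^ 3 := by rw [mul_pow, Real.sq_sqrt n.cast_nonneg]; ring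
  have hnt : (n : ℝ) ≤ t := n.cast_le_mul_sqrt
  have hn : (0 : ℝ) ≤ n := n.cast_nonneg
  have hSt : S ≤ n + t := by
    by_contra! hlt
    nlinarith [mul_pos (sub_pos.mpr hlt) (show 0 < S + t by linarith), mul_nonneg hn (hn.trans hnt)]
  linarith

theorem c4free_degree_square_sum (n : ℕ) (G : SimpleGraph (Fin n)) (h : C4Free G) :
    ∑ v : Fin n, (deg G v : ℝ) ^ 2 ≤ (n : ℝ) ^ 2 + 2 * (n : ℝ) ^ ((3 : ℝ) / 2) := by
  classical
  simp only [G.deg_eq_degree, Real.rpow_three_halves n.cast_nonneg]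
  have hQ := h.sum_degree_sq_le
  rw [Fintype.card_fin] at hQ
  replace hQ : ∑ v, (G.degree v : ℝ) ^ 2 ≤ n ^ 2 + ∑ v, (G.degree v : ℝ) := by exact_mod_cast hQ
  have hCS := sq_sum_le_card_mul_sum_sq (s := univ) (f := fun v => (G.degree v : ℝ))
  rw [card_univ, Fintype.card_fin] at hCS
  exact le_sq_add_two_mul_mul_sqrt hQ hCS
end

section
/- Let H be an n-vertex C₄-free graph and let Z ⊆ V(H) with |Z| = (1+3b)·√n for some 0 < b < 1/4, such that every vertex of Z has degree greater than (1−b)·√n in H. Then, for n sufficiently large, the proper square satisfies e(H²[Z]) ≥ b·n. -/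
/-! Each vertex `v` turns every pair of its neighbours in `Z` into an edge of `H²[Z]`, and
`C₄`-freeness makes these edges distinct for distinct `v`; hence
`e(H²[Z]) ≥ ∑ᵥ C(d_Z(v), 2) ≥ ∑ᵥ d_Z(v) - n`. Double counting gives
`∑ᵥ d_Z(v) = ∑_{z ∈ Z} deg z ≥ (1 + 3b)(1 - b) n`, so `e(H²[Z]) ≥ (2b - 3b²) n ≥ b n` as
`b ≤ 1/3`, already for every `n`. -/

open Finset

lemma deg_eq_degree {V : Type*} (G : SimpleGraph V) (v : V) [Fintype (G.neighborSet v)] :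
    deg G v = G.degree v := by
  rw [deg, ← G.card_neighborSet_eq_degree, ← Nat.card_eq_fintype_card]
  rfl

lemma Nat.le_choose_two_add_one (d : ℕ) : d ≤ d.choose 2 + 1 := by
  cases d with
  | zero => simp
  | succ d => rw [Nat.choose_succ_succ', Nat.choose_one_right]; omega

variable {V : Type*} [Fintype V] {G : SimpleGraph V} [DecidableRel G.Adj]

lemma SimpleGraph.sum_card_filter_adj_eq_sum_degree (Z : Finset V) :
    ∑ v, #{z ∈ Z | G.Adj v z} = ∑ z ∈ Z, G.degree z := by
  simp_rw [← G.card_neighborFinset_eq_degree, G.neighborFinset_eq_filter]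
  refine (sum_card_bipartiteAbove_eq_sum_card_bipartiteBelow G.Adj).trans
    (sum_congr rfl fun z _ => ?_)
  simp only [bipartiteBelow, G.adj_comm _ z]

lemma C4Free.sum_choose_two_le_card_edgeSet_induce_properSquare (hG : C4Free G) (Z : Finset V) :
    ∑ v, (#{z ∈ Z | G.Adj v z}).choose 2 ≤
      Nat.card ((properSquare G).induce (Z : Set V)).edgeSet := by
  classical
  set P : V → Finset (Sym2 V) := fun v => {z ∈ Z | G.Adj v z}.offDiag.image Sym2.mk.uncurry
  have mem_P {v : V} {a b : V} (h : s(a, b) ∈ P v) :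
      a ≠ b ∧ a ∈ Z ∧ b ∈ Z ∧ G.Adj v a ∧ G.Adj v b := by
    obtain ⟨⟨x, y⟩, hxy, he⟩ := mem_image.mp h
    simp only [mem_offDiag, mem_filter] at hxy
    rcases Sym2.eq_iff.mp he with ⟨rfl, rfl⟩ | ⟨rfl, rfl⟩ <;> tauto
  have hdisj : Set.PairwiseDisjoint ↑(univ : Finset V) P := by
    intro v _ w _ hvw
    refine disjoint_left.mpr fun e hv hw => ?_
    induction e using Sym2.ind with
    | _ a b =>
      obtain ⟨hab, -, -, hva, hvb⟩ := mem_P hv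
      obtain ⟨-, -, -, hwa, hwb⟩ := mem_P hw
      exact hvw (hG a b v w hab hva.symm hvb.symm hwa.symm hwb.symm)
  have hsub : univ.biUnion P ⊆ {e ∈ (properSquare G).edgeFinset | e.toFinset ⊆ Z} := by
    intro e he
    obtain ⟨v, -, hv⟩ := mem_biUnion.mp he
    induction e using Sym2.ind with
    | _ a b =>
      obtain ⟨hab, ha, hb, hva, hvb⟩ := mem_P hv
      simp only [mem_filter, SimpleGraph.mem_edgeFinset, SimpleGraph.mem_edgeSet]
      refine ⟨⟨hab, v, hva.symm, hvb⟩, ?_⟩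
      intro x hx
      rcases Sym2.mem_iff.mp (Sym2.mem_toFinset.mp hx) with rfl | rfl <;> assumption
  calc ∑ v, (#{z ∈ Z | G.Adj v z}).choose 2
      = ∑ v, #(P v) := by simp only [P, Sym2.card_image_offDiag]
    _ = #(univ.biUnion P) := (card_biUnion hdisj).symm
    _ ≤ #{e ∈ (properSquare G).edgeFinset | e.toFinset ⊆ Z} := card_le_card hsub
    _ = #((properSquare G).induce (Z : Set V)).edgeFinset :=
        SimpleGraph.card_filter_edgeFinset_toFinset_subset Z
    _ = Nat.card ((properSquare G).induce (Z : Set V)).edgeSet := by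
        rw [SimpleGraph.edgeFinset_card, Nat.card_eq_fintype_card]

lemma C4Free.sum_degree_le_card_edgeSet_induce_properSquare_add (hG : C4Free G) (Z : Finset V) :
    ∑ z ∈ Z, G.degree z ≤
      Nat.card ((properSquare G).induce (Z : Set V)).edgeSet + Fintype.card V := by
  calc ∑ z ∈ Z, G.degree z
      = ∑ v, #{z ∈ Z | G.Adj v z} := (G.sum_card_filter_adj_eq_sum_degree Z).symm
    _ ≤ ∑ v, ((#{z ∈ Z | G.Adj v z}).choose 2 + 1) :=
        sum_le_sum fun v _ => Nat.le_choose_two_add_one _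
    _ ≤ _ := by
        rw [sum_add_distrib, sum_const, card_univ, smul_eq_mul, mul_one]
        exact Nat.add_le_add_right (hG.sum_choose_two_le_card_edgeSet_induce_properSquare Z) _

theorem square_dense_on_medium_sets (b : ℝ) (hb0 : 0 < b) (hb : b < 1 / 4) :
    ∃ n₀ : ℕ, ∀ n ≥ n₀, ∀ H : SimpleGraph (Fin n), C4Free H →
      ∀ Z : Finset (Fin n),
        (Z.card : ℝ) = (1 + 3 * b) * Real.sqrt n →
        (∀ v ∈ Z, (deg H v : ℝ) > (1 - b) * Real.sqrt n) →
        (Nat.card ((properSquare H).induce (Z : Set (Fin n))).edgeSet : ℝ) ≥ b * n := by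
  classical
  refine ⟨0, fun n _ H hH Z hZ hdeg => ?_⟩
  have hsqrt : Real.sqrt n * Real.sqrt n = n := Real.mul_self_sqrt n.cast_nonneg
  have hdeg_sum : (1 + 3 * b) * (1 - b) * n ≤ ∑ z ∈ Z, (H.degree z : ℝ) :=
    calc (1 + 3 * b) * (1 - b) * n = ∑ _z ∈ Z, (1 - b) * Real.sqrt n := by
          rw [sum_const, nsmul_eq_mul, hZ]
          linear_combination (-(1 + 3 * b) * (1 - b)) * hsqrt
      _ ≤ ∑ z ∈ Z, (H.degree z : ℝ) :=
          sum_le_sum fun z hz => by rw [← deg_eq_degree]; exact (hdeg z hz).le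
  have hcount : ∑ z ∈ Z, (H.degree z : ℝ) ≤
      Nat.card ((properSquare H).induce (Z : Set (Fin n))).edgeSet + n := by
    exact_mod_cast Fintype.card_fin n ▸ hH.sum_degree_le_card_edgeSet_induce_properSquare_add Z
  nlinarith [mul_nonneg (mul_nonneg hb0.le (by linarith : (0 : ℝ) ≤ 1 - 3 * b)) n.cast_nonneg]
end
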